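/- Let 1 ≤ m ≤ n be integers with m < n, let h_1 be a C2-admissible numerical function with parameter s_1 = m which is of decreasing type, and define h_2(ℓ) = h_{m,n}(ℓ) - h_1(m+n-2-ℓ). Suppose h_2 is C2-admissible with parameter s_2 < m. Then h_2(m) < s_2; in particular the second ideal degree t_2 := inf{ℓ ≥ s_2 : h_2(ℓ) < s_2} satisfies t_2 ≤ m. -/

import Mathlib

def C2Admissible (h : ℤ → ℤ) (s : ℤ) : Prop :=
  1 ≤ s ∧ (∀ n < 0, h n = 0) ∧ (∀ n, 0 ≤ n → n ≤ s - 1 → h n = n + 1) ∧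
  (∀ n, s - 1 ≤ n → h (n + 1) ≤ h n) ∧ (∃ N, ∀ n ≥ N, h n = 0)

def DecreasingType (h : ℤ → ℤ) : Prop :=
  ∀ a, h (a + 1) < h a → ∀ n, a ≤ n → h (n + 1) < h n ∨ h n = 0

noncomputable def genus (h : ℤ → ℤ) : ℤ :=
  ∑ᶠ n : ℤ, if 2 ≤ n then (n - 1) * h n else 0

def hCI (m n ℓ : ℤ) : ℤ :=
  if 0 ≤ ℓ ∧ ℓ ≤ m - 1 then ℓ + 1
  else if m - 1 ≤ ℓ ∧ ℓ ≤ n - 1 then m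
  else if n - 1 ≤ ℓ ∧ ℓ ≤ m + n - 1 then m + n - 1 - ℓ
  else 0

/-!
Suppose `h₂ m ≥ s₂`. Since `h₂` is non-increasing from `s₂ - 1` on, where it equals `s₂`, it is
constantly `s₂` on `[s₂ - 1, m]`. As `h_{m,n} = m` at `m - 1` and at `m`, the defining relation gives
`h₁ (n - 2) = h₁ (n - 1) = m - s₂ > 0`. But `h₁ (m - 1) = m > m - s₂`, so `h₁` drops somewhere in
`[m - 1, n - 2]`, and being of decreasing type it must then drop strictly at `n - 2` unless it
vanishes there: a contradiction.
-/

theorem exists_apply_add_one_lt_of_apply_lt {β : Type*} [LinearOrder β] {f : ℤ → β} {a b : ℤ}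
    (hab : a ≤ b) (hlt : f b < f a) : ∃ c, a ≤ c ∧ c < b ∧ f (c + 1) < f c := by
  by_contra! hstep
  have hmono : MonotoneOn f (Set.Icc a b) :=
    monotoneOn_of_le_add_one Set.ordConnected_Icc fun c _ hc hc1 =>
      hstep c hc.1 (by linarith [hc1.2])
  exact (hmono ⟨le_rfl, hab⟩ ⟨hab, le_rfl⟩ hab).not_gt hlt

theorem DecreasingType.apply_add_one_lt_or_eq_zero {h : ℤ → ℤ} (hh : DecreasingType h)
    {a b : ℤ} (hab : a ≤ b) (hlt : h b < h a) : h (b + 1) < h b ∨ h b = 0 := by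
  obtain ⟨c, -, hcb, hdrop⟩ := exists_apply_add_one_lt_of_apply_lt hab hlt
  exact hh c hdrop b hcb.le

namespace C2Admissible

variable {h : ℤ → ℤ} {s : ℤ}

theorem one_le (hh : C2Admissible h s) : 1 ≤ s := hh.1

theorem apply_sub_one (hh : C2Admissible h s) : h (s - 1) = s := by
  rw [hh.2.2.1 (s - 1) (by linarith [hh.one_le]) le_rfl]
  ring

theorem antitoneOn (hh : C2Admissible h s) : AntitoneOn h (Set.Ici (s - 1)) :=
  antitoneOn_of_add_one_le Set.ordConnected_Ici fun a _ ha _ => hh.2.2.2.1 a ha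

theorem apply_eq_of_le_apply {k ℓ : ℤ} (hh : C2Admissible h s) (hℓ : s - 1 ≤ ℓ) (hℓk : ℓ ≤ k)
    (hk : s ≤ h k) : h ℓ = s := by
  have hle : h ℓ ≤ h (s - 1) := hh.antitoneOn (Set.mem_Ici.2 le_rfl) hℓ hℓ
  have hge : h k ≤ h ℓ := hh.antitoneOn hℓ (Set.mem_Ici.2 (hℓ.trans hℓk)) hℓk
  linarith [hh.apply_sub_one]

end C2Admissible

theorem hCI_eq_of_le_of_le {m n ℓ : ℤ} (h₁ : m - 1 ≤ ℓ) (h₂ : ℓ ≤ n - 1) : hCI m n ℓ = m := by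
  unfold hCI
  split_ifs <;> omega

theorem linked_t2_le_m_general (m n s₂ : ℤ) (hmn : m < n)
    (h₁ h₂ : ℤ → ℤ) (hh₁ : C2Admissible h₁ m) (hdec : DecreasingType h₁)
    (hdef : ∀ ℓ, h₂ ℓ = hCI m n ℓ - h₁ (m + n - 2 - ℓ))
    (hh₂ : C2Admissible h₂ s₂) (hs₂ : s₂ < m) :
    h₂ m < s₂ ∧ sInf {ℓ : ℤ | s₂ ≤ ℓ ∧ h₂ ℓ < s₂} ≤ m := by
  have hs₂_pos := hh₂.one_le
  have key : h₂ m < s₂ := by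
    by_contra! hge
    have hn1 : h₁ (n - 1) = m - s₂ := by
      have hℓ := hdef (m - 1)
      rw [hh₂.apply_eq_of_le_apply (by omega) (by omega) hge,
        hCI_eq_of_le_of_le le_rfl (by omega), show m + n - 2 - (m - 1) = n - 1 by ring] at hℓ
      omega
    have hn2 : h₁ (n - 2) = m - s₂ := by
      have hℓ := hdef m
      rw [hh₂.apply_eq_of_le_apply (by omega) le_rfl hge,
        hCI_eq_of_le_of_le (by omega) (by omega), show m + n - 2 - m = n - 2 by ring] at hℓ
      omega
    have hm1 := hh₁.apply_sub_one
    rcases hdec.apply_add_one_lt_or_eq_zero (a := m - 1) (b := n - 2) (by omega) (by omega)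
      with hlt | hzero
    · rw [show n - 2 + 1 = n - 1 by ring] at hlt
      omega
    · omega
  exact ⟨key, csInf_le ⟨s₂, fun _ hx => hx.1⟩ ⟨hs₂.le, key⟩⟩

theorem linked_t2_le_m (m n s₂ : ℤ) (hm : 1 ≤ m) (hmn : m < n)
    (h₁ h₂ : ℤ → ℤ) (hh₁ : C2Admissible h₁ m) (hdec : DecreasingType h₁)
    (hdef : ∀ ℓ, h₂ ℓ = hCI m n ℓ - h₁ (m + n - 2 - ℓ))
    (hh₂ : C2Admissible h₂ s₂) (hs₂ : s₂ < m) :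
    h₂ m < s₂ ∧ sInf {ℓ : ℤ | s₂ ≤ ℓ ∧ h₂ ℓ < s₂} ≤ m :=
  linked_t2_le_m_general m n s₂ hmn h₁ h₂ hh₁ hdec hdef hh₂ hs₂
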